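/- arXiv:2204.08659 — 3 statements merged into one kernel-verified Lean document; each statement's English description precedes it below -/
import Mathlib

section
/- Let Y ∼ NB(r,p) (negative binomial counting failures before the r-th success, p ∈ (0,1)). For any n ∈ ℕ with P(Y > n) > 0, the truncated mean satisfies E[Y | Y > n] = E[Y] + (n+1)/(p(1+β_{n+1})), where β_{n+1} = P(Y > n+1)/P(Y = n+1). -/
/-!
The probabilities `a y = C(y + r - 1, y) p ^ r (1 - p) ^ y` satisfy the recurrence
`(y + 1) a (y + 1) = (1 - p) (y + r) a y`. Summing it over `y ≥ m` gives
`p ∑_{y ≥ m} y a y = m a m + r (1 - p) ∑_{y ≥ m} a y`. For `m = 0` this is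
`p E[Y] = r (1 - p)`, and for `m = n + 1` it becomes
`p E[Y; Y > n] = (n + 1) P(Y = n + 1) + p E[Y] P(Y > n)`.
Dividing by `p P(Y > n) = p (P(Y = n + 1) + P(Y > n + 1))` gives the truncated mean.
-/

open MeasureTheory

lemma mul_tsum_natCast_mul_nat_add_of_recurrence {a : ℕ → ℝ} {q c : ℝ}
    (hrec : ∀ y : ℕ, ((y : ℝ) + 1) * a (y + 1) = q * ((y + c) * a y))
    (ha : Summable a) (hb : Summable fun y : ℕ ↦ (y : ℝ) * a y) (m : ℕ) :
    (1 - q) * ∑' k, ((k + m : ℕ) : ℝ) * a (k + m) = m * a m + c * q * ∑' k, a (k + m) := by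
  have ha' : Summable fun k ↦ a (k + m) := (summable_nat_add_iff m).2 ha
  have hb' : Summable fun k ↦ ((k + m : ℕ) : ℝ) * a (k + m) := (summable_nat_add_iff m).2 hb
  have hrec' (k : ℕ) : ((k + 1 + m : ℕ) : ℝ) * a (k + 1 + m)
      = q * (((k + m : ℕ) : ℝ) * a (k + m)) + c * q * a (k + m) := by
    rw [show k + 1 + m = k + m + 1 by omega]
    have h := hrec (k + m)
    push_cast at h ⊢
    linear_combination h
  have hshift : ∑' k, ((k + m : ℕ) : ℝ) * a (k + m)
      = m * a m + q * ∑' k, ((k + m : ℕ) : ℝ) * a (k + m) + c * q * ∑' k, a (k + m) :=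
    calc ∑' k, ((k + m : ℕ) : ℝ) * a (k + m)
        = ((0 + m : ℕ) : ℝ) * a (0 + m) + ∑' k, ((k + 1 + m : ℕ) : ℝ) * a (k + 1 + m) :=
          hb'.tsum_eq_zero_add
      _ = m * a m + ∑' k, (q * (((k + m : ℕ) : ℝ) * a (k + m)) + c * q * a (k + m)) := by
          rw [zero_add, tsum_congr hrec']
      _ = _ := by
          rw [(hb'.mul_left _).tsum_add (ha'.mul_left _), tsum_mul_left, tsum_mul_left,
            add_assoc]
  linear_combination hshift

lemma tsum_indicator_Ioi_eq_tsum_nat_add {g : ℕ → ℝ} (hg : Summable g) (n : ℕ) :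
    ∑' y, (Set.Ioi n).indicator g y = ∑' k, g (k + (n + 1)) := by
  rw [← (hg.indicator _).sum_add_tsum_nat_add (n + 1),
    Finset.sum_eq_zero fun y hy ↦ Set.indicator_of_notMem (by simpa using hy) _, zero_add]
  exact tsum_congr fun k ↦ Set.indicator_of_mem (by simp only [Set.mem_Ioi]; omega) _

noncomputable def negBinPMF (r : ℕ) (p : ℝ) (y : ℕ) : ℝ :=
  (y + r - 1).choose y * p ^ r * (1 - p) ^ y

section NegBin

variable {r : ℕ} {p : ℝ}

lemma norm_one_sub_lt_one (hp : p ∈ Set.Ioo 0 1) : ‖1 - p‖ < 1 := by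
  rw [Real.norm_eq_abs, abs_lt]
  constructor <;> linarith [hp.1, hp.2]

lemma negBinPMF_eq_mul_choose_mul_pow (hr : 1 ≤ r) (y : ℕ) :
    negBinPMF r p y = p ^ r * ((y + (r - 1)).choose (r - 1) * (1 - p) ^ y) := by
  rw [negBinPMF, Nat.add_sub_assoc hr, Nat.choose_symm_add]
  ring

lemma negBinPMF_pos (hr : 1 ≤ r) (hp : p ∈ Set.Ioo 0 1) (y : ℕ) : 0 < negBinPMF r p y := by
  have hc : 0 < (y + (r - 1)).choose (r - 1) := Nat.choose_pos (Nat.le_add_left _ _)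
  rw [negBinPMF_eq_mul_choose_mul_pow hr]
  exact mul_pos (pow_pos hp.1 r) (mul_pos (by exact_mod_cast hc) (pow_pos (sub_pos.2 hp.2) y))

lemma hasSum_negBinPMF (hr : 1 ≤ r) (hp : p ∈ Set.Ioo 0 1) : HasSum (negBinPMF r p) 1 := by
  have h := (hasSum_choose_mul_geometric_of_norm_lt_one (r - 1)
    (norm_one_sub_lt_one hp)).mul_left (p ^ r)
  rw [Nat.sub_add_cancel hr, sub_sub_cancel, mul_one_div, div_self (pow_ne_zero r hp.1.ne')] at h
  exact h.congr_fun (negBinPMF_eq_mul_choose_mul_pow hr)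

lemma summable_natCast_mul_negBinPMF (hr : 1 ≤ r) (hp : p ∈ Set.Ioo 0 1) :
    Summable fun y : ℕ ↦ (y : ℝ) * negBinPMF r p y := by
  refine .of_nonneg_of_le (fun y ↦ mul_nonneg y.cast_nonneg (negBinPMF_pos hr hp y).le)
    (fun y ↦ ?_)
    ((summable_choose_mul_geometric_of_norm_lt_one r (norm_one_sub_lt_one hp)).mul_left
      (r * p ^ r))
  have hchoose : y * (y + (r - 1)).choose (r - 1) ≤ r * (y + r).choose r := by
    have h := Nat.add_one_mul_choose_eq (y + (r - 1)) (r - 1)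
    rw [Nat.sub_add_cancel hr, add_assoc, Nat.sub_add_cancel hr] at h
    calc y * (y + (r - 1)).choose (r - 1) ≤ (y + r) * (y + (r - 1)).choose (r - 1) :=
          Nat.mul_le_mul_right _ (Nat.le_add_right y r)
      _ = r * (y + r).choose r := by rw [h, mul_comm]
  have hchoose' : (y : ℝ) * (y + (r - 1)).choose (r - 1) ≤ r * (y + r).choose r := by
    exact_mod_cast hchoose
  have hpq : 0 ≤ p ^ r * (1 - p) ^ y :=
    mul_nonneg (pow_nonneg hp.1.le r) (pow_nonneg (sub_nonneg.2 hp.2.le) y)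
  rw [negBinPMF_eq_mul_choose_mul_pow hr]
  calc (y : ℝ) * (p ^ r * ((y + (r - 1)).choose (r - 1) * (1 - p) ^ y))
      = (y * (y + (r - 1)).choose (r - 1)) * (p ^ r * (1 - p) ^ y) := by ring
    _ ≤ (r * (y + r).choose r) * (p ^ r * (1 - p) ^ y) :=
        mul_le_mul_of_nonneg_right hchoose' hpq
    _ = r * p ^ r * ((y + r).choose r * (1 - p) ^ y) := by ring

lemma succ_mul_negBinPMF_succ (hr : 1 ≤ r) (y : ℕ) :
    ((y : ℝ) + 1) * negBinPMF r p (y + 1) = (1 - p) * ((y + r) * negBinPMF r p y) := by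
  have h := Nat.add_one_mul_choose_eq (y + r - 1) y
  rw [Nat.sub_add_cancel (by omega : 1 ≤ y + r)] at h
  have h' : ((y + r : ℕ) : ℝ) * (y + r - 1).choose y
      = (y + r).choose (y + 1) * ((y : ℝ) + 1) := by
    exact_mod_cast h
  rw [negBinPMF, negBinPMF, show y + 1 + r - 1 = y + r by omega, pow_succ]
  push_cast at h'
  linear_combination (-(1 - p) * p ^ r * (1 - p) ^ y) * h'

lemma negBinPMF_tail_mean_eq (hr : 1 ≤ r) (hp : p ∈ Set.Ioo 0 1) (n : ℕ) :
    (∑' k, ((k + (n + 1) : ℕ) : ℝ) * negBinPMF r p (k + (n + 1)))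
        / ∑' k, negBinPMF r p (k + (n + 1))
      = ∑' y : ℕ, y * negBinPMF r p y
        + (n + 1) /
          (p * (1 + (∑' k, negBinPMF r p (k + (n + 1 + 1))) / negBinPMF r p (n + 1))) := by
  have hpmf := hasSum_negBinPMF hr hp
  have hkey := mul_tsum_natCast_mul_nat_add_of_recurrence (succ_mul_negBinPMF_succ hr)
    hpmf.summable (summable_natCast_mul_negBinPMF hr hp)
  have hmean := hkey 0
  simp only [add_zero, Nat.cast_zero, zero_mul, zero_add, hpmf.tsum_eq, mul_one, sub_sub_cancel]
    at hmean
  have htail := hkey (n + 1)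
  rw [sub_sub_cancel] at htail
  have hsplit : ∑' k, negBinPMF r p (k + (n + 1))
      = negBinPMF r p (n + 1) + ∑' k, negBinPMF r p (k + (n + 1 + 1)) := by
    rw [((summable_nat_add_iff (n + 1)).2 hpmf.summable).tsum_eq_zero_add, zero_add]
    exact congrArg _ (tsum_congr fun k ↦ congrArg _ (by omega))
  have hpos := negBinPMF_pos hr hp (n + 1)
  set rest := ∑' k, negBinPMF r p (k + (n + 1 + 1))
  have hrest : 0 ≤ rest := tsum_nonneg fun k ↦ (negBinPMF_pos hr hp _).le
  rw [hsplit] at htail ⊢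
  push_cast at htail ⊢
  have hp0 := hp.1.ne'
  field_simp
  linear_combination htail - (rest + negBinPMF r p (n + 1)) * hmean

end NegBin

section NatValued

variable {Ω : Type*} [MeasurableSpace Ω] {μ : Measure Ω} {Y : Ω → ℕ} {a : ℕ → ℝ}

lemma integral_comp_eq_tsum (hY : Measurable Y)
    (hYa : ∀ y, μ {ω | Y ω = y} = ENNReal.ofReal (a y)) (ha : ∀ y, 0 ≤ a y)
    {f : ℕ → ℝ} (hf : Summable fun y ↦ f y * a y) :
    ∫ ω, f (Y ω) ∂μ = ∑' y, f y * a y := by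
  have hmap : μ.map Y = Measure.sum fun y ↦ ENNReal.ofReal (a y) • Measure.dirac y := by
    rw [← (μ.map Y).sum_smul_dirac]
    congr! with y
    rw [Measure.map_apply hY (measurableSet_singleton y)]
    exact hYa y
  have hf' : Summable fun y ↦ (ENNReal.ofReal (a y)).toReal * ‖f y‖ := by
    simpa [ENNReal.toReal_ofReal (ha _), abs_mul, abs_of_nonneg (ha _), mul_comm] using hf.abs
  rw [← integral_map hY.aemeasurable measurable_from_top.aestronglyMeasurable, hmap,
    integral_sum_dirac_eq_tsum (fun _ ↦ ENNReal.ofReal_ne_top) hf']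
  simp [ENNReal.toReal_ofReal (ha _), mul_comm]

lemma setIntegral_preimage_eq_tsum (hY : Measurable Y)
    (hYa : ∀ y, μ {ω | Y ω = y} = ENNReal.ofReal (a y)) (ha : ∀ y, 0 ≤ a y)
    {f : ℕ → ℝ} (hf : Summable fun y ↦ f y * a y) (s : Set ℕ) :
    ∫ ω in Y ⁻¹' s, f (Y ω) ∂μ = ∑' y, s.indicator (fun y ↦ f y * a y) y := by
  have hmul y : s.indicator (fun y ↦ f y * a y) y = s.indicator f y * a y :=
    Set.indicator_mul_left s f a
  have hcomp : (fun ω ↦ (Y ⁻¹' s).indicator (fun ω ↦ f (Y ω)) ω)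
      = fun ω ↦ s.indicator f (Y ω) :=
    funext fun ω ↦ Set.indicator_comp_right Y
  rw [← integral_indicator (hY (DiscreteMeasurableSpace.forall_measurableSet s)), hcomp,
    integral_comp_eq_tsum hY hYa ha ((hf.indicator s).congr hmul)]
  exact tsum_congr fun y ↦ (hmul y).symm

lemma measureReal_preimage_eq_tsum (hY : Measurable Y)
    (hYa : ∀ y, μ {ω | Y ω = y} = ENNReal.ofReal (a y)) (ha : ∀ y, 0 ≤ a y)
    (has : Summable a) (s : Set ℕ) :
    μ.real (Y ⁻¹' s) = ∑' y, s.indicator a y := by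
  simpa using setIntegral_preimage_eq_tsum hY hYa ha (f := fun _ ↦ 1) (by simpa using has) s

end NatValued

theorem negative_binomial_truncated_mean_general
    {Ω : Type*} [MeasurableSpace Ω] (μ : Measure Ω)
    (r : ℕ) (hr : 1 ≤ r) (p : ℝ) (hp : p ∈ Set.Ioo (0:ℝ) 1)
    (Y : Ω → ℕ) (hYmeas : Measurable Y)
    (hY : ∀ y : ℕ, μ {ω | Y ω = y}
      = ENNReal.ofReal ((Nat.choose (y + r - 1) y : ℝ) * p ^ r * (1 - p) ^ y))
    (n : ℕ) :
    (∫ ω in {ω | n < Y ω}, (Y ω : ℝ) ∂μ) / (μ {ω | n < Y ω}).toReal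
      = (∫ ω, (Y ω : ℝ) ∂μ)
        + ((n : ℝ) + 1) /
          (p * (1 + (μ {ω | n + 1 < Y ω}).toReal / (μ {ω | Y ω = n + 1}).toReal)) := by
  have hYa : ∀ y, μ {ω | Y ω = y} = ENNReal.ofReal (negBinPMF r p y) := hY
  have ha y : 0 ≤ negBinPMF r p y := (negBinPMF_pos hr hp y).le
  have hsum := (hasSum_negBinPMF hr hp).summable
  have hmul := summable_natCast_mul_negBinPMF hr hp
  have htail (m : ℕ) : (μ {ω | m < Y ω}).toReal = ∑' k, negBinPMF r p (k + (m + 1)) := by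
    rw [← tsum_indicator_Ioi_eq_tsum_nat_add hsum]
    exact measureReal_preimage_eq_tsum hYmeas hYa ha hsum (Set.Ioi m)
  have htail_integral : ∫ ω in {ω | n < Y ω}, (Y ω : ℝ) ∂μ
      = ∑' k, ((k + (n + 1) : ℕ) : ℝ) * negBinPMF r p (k + (n + 1)) := by
    rw [← tsum_indicator_Ioi_eq_tsum_nat_add hmul]
    exact setIntegral_preimage_eq_tsum hYmeas hYa ha hmul (Set.Ioi n)
  rw [htail_integral, htail, htail, integral_comp_eq_tsum hYmeas hYa ha hmul, hYa,
    ENNReal.toReal_ofReal (ha _)]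
  exact_mod_cast negBinPMF_tail_mean_eq hr hp n

/-- For Y ∼ NB(r,p) and n with P(Y > n) > 0,
E[Y | Y > n] = E[Y] + (n+1)/(p(1+β_{n+1})) with β_{n+1} = P(Y > n+1)/P(Y = n+1). -/
theorem negative_binomial_truncated_mean
    {Ω : Type*} [MeasurableSpace Ω] (μ : Measure Ω) [IsProbabilityMeasure μ]
    (r : ℕ) (hr : 1 ≤ r) (p : ℝ) (hp : p ∈ Set.Ioo (0:ℝ) 1)
    (Y : Ω → ℕ) (hYmeas : Measurable Y)
    (hY : ∀ y : ℕ, μ {ω | Y ω = y}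
      = ENNReal.ofReal ((Nat.choose (y + r - 1) y : ℝ) * p ^ r * (1 - p) ^ y))
    (n : ℕ) (hpos : μ {ω | n < Y ω} ≠ 0) :
    (∫ ω in {ω | n < Y ω}, (Y ω : ℝ) ∂μ) / (μ {ω | n < Y ω}).toReal
      = (∫ ω, (Y ω : ℝ) ∂μ)
        + ((n : ℝ) + 1) /
          (p * (1 + (μ {ω | n + 1 < Y ω}).toReal / (μ {ω | Y ω = n + 1}).toReal)) :=
  negative_binomial_truncated_mean_general μ r hr p hp Y hYmeas hY n
end

section
/- Fix x ∈ (0,1], λ ∈ [0,1), a continuous nonnegative u : Δ(K) → ℝ, and suppose v : Δ(K) → ℝ satisfies the recursion v(p) = Cav[(1−λ)u + λ(1−x)(v∘φ)](p) + λx⟨p, ξ⟩ with ξ_ℓ = v(δ_ℓ M) and φ(q) = qM. If p ∈ Δ(K) satisfies u(p) = (Cav u)(p), then v(p) = (1−λ)u(p) + λ(1−x)v(pM) + λx⟨p, ξ⟩; i.e., the no-split action is optimal at p. -/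
/-!
The recursion writes `v` on the simplex as a concavification plus a linear function, so `v` is
concave there, and so is `q ↦ v (q M)`, since `q ↦ q M` is linear and maps the simplex into
itself. Hence `(1 - λ) Cav u + λ (1 - x) v (· M)` is a concave majorant of the payoff
`(1 - λ) u + λ (1 - x) v (· M)`, and it touches the payoff at `p` because `u p = Cav u p`;
so the concavification of the payoff at `p` is the payoff itself.
-/

open Finset

/-- The concavification (concave envelope) of `u` over the simplex `Δ(K)`. -/
noncomputable def cav {K : Type*} [Fintype K] (u : (K → ℝ) → ℝ) (p : K → ℝ) : ℝ :=
  sInf {y | ∃ g : (K → ℝ) → ℝ, ConcaveOn ℝ (stdSimplex ℝ K) g ∧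
    (∀ q ∈ stdSimplex ℝ K, u q ≤ g q) ∧ g p = y}

open Matrix

theorem Matrix.vecMul_mem_stdSimplex_of_mem_rowStochastic {R n : Type*} [Fintype n]
    [DecidableEq n] [CommSemiring R] [PartialOrder R] [IsOrderedRing R] {M : Matrix n n R}
    (hM : M ∈ rowStochastic R n) {q : n → R} (hq : q ∈ stdSimplex R n) :
    q ᵥ* M ∈ stdSimplex R n := by
  refine ⟨nonneg_vecMul_of_mem_rowStochastic hM hq.1, ?_⟩
  rw [← dotProduct_one]
  exact vecMul_dotProduct_one_eq_one_rowStochastic hM ((dotProduct_one q).trans hq.2)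

section Cav

variable {K : Type*} [Fintype K]

def HasConcaveMajorant (f : (K → ℝ) → ℝ) : Prop :=
  ∃ g : (K → ℝ) → ℝ, ConcaveOn ℝ (stdSimplex ℝ K) g ∧ ∀ q ∈ stdSimplex ℝ K, f q ≤ g q

theorem HasConcaveMajorant.of_continuousOn {f : (K → ℝ) → ℝ}
    (hf : ContinuousOn f (stdSimplex ℝ K)) : HasConcaveMajorant f := by
  obtain ⟨C, hC⟩ := (isCompact_stdSimplex ℝ K).bddAbove_image hf
  exact ⟨fun _ ↦ C, concaveOn_const C (convex_stdSimplex ℝ K), fun q hq ↦ hC ⟨q, hq, rfl⟩⟩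

theorem cav_of_not_hasConcaveMajorant {f : (K → ℝ) → ℝ} (hf : ¬HasConcaveMajorant f)
    (q : K → ℝ) : cav f q = 0 := by
  rw [cav]
  convert Real.sInf_empty
  refine Set.eq_empty_of_forall_notMem ?_
  rintro y ⟨g, hg, hfg, rfl⟩
  exact hf ⟨g, hg, hfg⟩

theorem cav_le {f g : (K → ℝ) → ℝ} (hg : ConcaveOn ℝ (stdSimplex ℝ K) g)
    (hfg : ∀ q ∈ stdSimplex ℝ K, f q ≤ g q) {q : K → ℝ} (hq : q ∈ stdSimplex ℝ K) :
    cav f q ≤ g q :=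
  csInf_le ⟨f q, by rintro y ⟨g', -, hfg', rfl⟩; exact hfg' q hq⟩ ⟨g, hg, hfg, rfl⟩

theorem le_cav {f : (K → ℝ) → ℝ} (hf : HasConcaveMajorant f) {q : K → ℝ}
    (hq : q ∈ stdSimplex ℝ K) : f q ≤ cav f q := by
  obtain ⟨g₀, hg₀, hfg₀⟩ := hf
  refine le_csInf ⟨g₀ q, g₀, hg₀, hfg₀, rfl⟩ ?_
  rintro y ⟨g, -, hfg, rfl⟩
  exact hfg q hq

theorem concaveOn_cav {f : (K → ℝ) → ℝ} (hf : HasConcaveMajorant f) :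
    ConcaveOn ℝ (stdSimplex ℝ K) (cav f) := by
  obtain ⟨g₀, hg₀, hfg₀⟩ := hf
  refine ⟨convex_stdSimplex ℝ K, fun q₁ hq₁ q₂ hq₂ a b ha hb hab ↦ ?_⟩
  refine le_csInf ⟨g₀ _, g₀, hg₀, hfg₀, rfl⟩ ?_
  rintro y ⟨g, hg, hfg, rfl⟩
  calc a • cav f q₁ + b • cav f q₂ ≤ a • g q₁ + b • g q₂ := by
        gcongr <;> exact cav_le hg hfg ‹_›
    _ ≤ g (a • q₁ + b • q₂) := hg.2 hq₁ hq₂ ha hb hab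

theorem cav_eq_of_concave_majorant_eq {f g : (K → ℝ) → ℝ}
    (hg : ConcaveOn ℝ (stdSimplex ℝ K) g) (hfg : ∀ q ∈ stdSimplex ℝ K, f q ≤ g q)
    {p : K → ℝ} (hp : p ∈ stdSimplex ℝ K) (hgp : g p = f p) : cav f p = f p :=
  le_antisymm (hgp ▸ cav_le hg hfg hp) (le_cav ⟨g, hg, hfg⟩ hp)

theorem concaveOn_of_eqOn_cav_add_dotProduct {f v : (K → ℝ) → ℝ} (hf : HasConcaveMajorant f)
    (c : ℝ) (ξ : K → ℝ) (hv : ∀ q ∈ stdSimplex ℝ K, v q = cav f q + c * (q ⬝ᵥ ξ)) :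
    ConcaveOn ℝ (stdSimplex ℝ K) v := by
  have hlin : ConcaveOn ℝ (stdSimplex ℝ K) fun q ↦ c * (q ⬝ᵥ ξ) :=
    (c • (dotProductBilin ℝ ℝ).flip ξ).concaveOn (convex_stdSimplex ℝ K)
  exact ((concaveOn_cav hf).add hlin).congr fun q hq ↦ (hv q hq).symm

theorem hasConcaveMajorant_of_eqOn_cav_add_dotProduct {M : Matrix K K ℝ} (hM : ∀ q ∈ stdSimplex ℝ K, q ᵥ* M ∈ stdSimplex ℝ K)
    {u v : (K → ℝ) → ℝ} (hu : ContinuousOn u (stdSimplex ℝ K)) (a b c : ℝ) (ξ : K → ℝ)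
    (hv : ∀ q ∈ stdSimplex ℝ K,
      v q = cav (fun q ↦ a * u q + b * v (q ᵥ* M)) q + c * (q ⬝ᵥ ξ)) :
    HasConcaveMajorant fun q ↦ a * u q + b * v (q ᵥ* M) := by
  -- Otherwise `cav` takes its junk value `0`, so `v` is linear on the simplex and
  -- `a * u + b * v ∘ (· ᵥ* M)` is continuous there, hence bounded.
  by_contra hf
  have hv_lin : ∀ q ∈ stdSimplex ℝ K, v q = c * (q ⬝ᵥ ξ) := fun q hq ↦ by
    rw [hv q hq, cav_of_not_hasConcaveMajorant hf, zero_add]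
  refine hf (HasConcaveMajorant.of_continuousOn ?_)
  refine ContinuousOn.congr (f := fun q ↦ a * u q + b * (c * ((q ᵥ* M) ⬝ᵥ ξ))) ?_
    fun q hq ↦ by simp only [hv_lin _ (hM q hq)]
  exact (continuousOn_const.mul hu).add (Continuous.continuousOn (by fun_prop))

end Cav

theorem no_split_optimal_at_cav_point_general
    {K : Type*} [Fintype K] (x l : ℝ) (hx : x ∈ Set.Ioc (0:ℝ) 1)
    (hl : l ∈ Set.Ico (0:ℝ) 1)
    (M : K → K → ℝ) (hMnonneg : ∀ i j, 0 ≤ M i j) (hMrow : ∀ i, ∑ j, M i j = 1)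
    (u : (K → ℝ) → ℝ) (hu : ContinuousOn u (stdSimplex ℝ K))
    (v : (K → ℝ) → ℝ)
    (hrec : ∀ p ∈ stdSimplex ℝ K,
      v p = cav (fun q => (1 - l) * u q + l * (1 - x) * v (fun j => ∑ i, q i * M i j)) p
        + l * x * ∑ k, p k * v (fun j => M k j))
    (p : K → ℝ) (hp : p ∈ stdSimplex ℝ K) (hcav : u p = cav u p) :
    v p = (1 - l) * u p + l * (1 - x) * v (fun j => ∑ i, p i * M i j)
      + l * x * ∑ k, p k * v (fun j => M k j) := by
  classical
  set f : (K → ℝ) → ℝ := fun q ↦ (1 - l) * u q + l * (1 - x) * v (q ᵥ* M)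
  replace hrec : ∀ q ∈ stdSimplex ℝ K, v q = cav f q + l * x * (q ⬝ᵥ fun k ↦ v (M k)) := hrec
  have hM : ∀ q ∈ stdSimplex ℝ K, q ᵥ* M ∈ stdSimplex ℝ K := fun q hq ↦
    vecMul_mem_stdSimplex_of_mem_rowStochastic
      (mem_rowStochastic_iff_sum.2 ⟨hMnonneg, hMrow⟩) hq
  have hv : ConcaveOn ℝ (stdSimplex ℝ K) v :=
    concaveOn_of_eqOn_cav_add_dotProduct
      (hasConcaveMajorant_of_eqOn_cav_add_dotProduct hM hu _ _ _ _ hrec) _ _ hrec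
  have hvM : ConcaveOn ℝ (stdSimplex ℝ K) fun q ↦ v (q ᵥ* M) :=
    (hv.comp_linearMap (vecMulLinear M)).subset hM (convex_stdSimplex ℝ K)
  have hu_le : ∀ q ∈ stdSimplex ℝ K, u q ≤ cav u q := fun q ↦ le_cav (.of_continuousOn hu)
  have hl' : 0 ≤ 1 - l := sub_nonneg.2 hl.2.le
  have hg : ConcaveOn ℝ (stdSimplex ℝ K) fun q ↦ (1 - l) * cav u q + l * (1 - x) * v (q ᵥ* M) :=
    ((concaveOn_cav (.of_continuousOn hu)).smul hl').add
      (hvM.smul (mul_nonneg hl.1 (sub_nonneg.2 hx.2)))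
  have hfp : cav f p = f p :=
    cav_eq_of_concave_majorant_eq hg (fun q hq ↦ by simp only [f]; gcongr; exact hu_le q hq) hp
      (by rw [← hcav])
  rw [hrec p hp, hfp]
  rfl

/-- If v satisfies the recursion
v(p) = Cav[(1−λ)u + λ(1−x)(v∘φ)](p) + λx⟨p, ξ⟩ and u(p) = (Cav u)(p), then
v(p) = (1−λ)u(p) + λ(1−x)v(pM) + λx⟨p, ξ⟩, i.e. not splitting is optimal at p. -/
theorem no_split_optimal_at_cav_point
    {K : Type*} [Fintype K] (x l : ℝ) (hx : x ∈ Set.Ioc (0:ℝ) 1)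
    (hl : l ∈ Set.Ico (0:ℝ) 1)
    (M : K → K → ℝ) (hMnonneg : ∀ i j, 0 ≤ M i j) (hMrow : ∀ i, ∑ j, M i j = 1)
    (u : (K → ℝ) → ℝ) (hu : ContinuousOn u (stdSimplex ℝ K))
    (hu0 : ∀ q ∈ stdSimplex ℝ K, 0 ≤ u q)
    (v : (K → ℝ) → ℝ)
    (hrec : ∀ p ∈ stdSimplex ℝ K,
      v p = cav (fun q => (1 - l) * u q + l * (1 - x) * v (fun j => ∑ i, q i * M i j)) p
        + l * x * ∑ k, p k * v (fun j => M k j))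
    (p : K → ℝ) (hp : p ∈ stdSimplex ℝ K) (hcav : u p = cav u p) :
    v p = (1 - l) * u p + l * (1 - x) * v (fun j => ∑ i, p i * M i j)
      + l * x * ∑ k, p k * v (fun j => M k j) :=
  no_split_optimal_at_cav_point_general x l hx hl M hMnonneg hMrow u hu v hrec p hp hcav
end

section
/- Let x ∈ (0,1], r ∈ ℕ, n ∈ ℕ with r ≤ nx, and let Y ∼ NB(r, x) (failures before the r-th success). Then conditional on {Y > n − r}, E[r + Y | Y > n − r] ≤ r(1−x)/x + (n − r + 1)/x + r. In particular, with a ≤ nx, E[κ_1+⋯+κ_a | κ_1+⋯+κ_a > n] ≤ n + 2n/x where κ_1+⋯+κ_a − a ∼ NB(a,x). -/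
/-! With `q` the mass function of NB(r, x) and `μ = r(1-x)/x` its mean, the recurrence
`(y+1) q(y+1) = (y+r)(1-x) q(y)` makes `(y - μ) q(y) = F y - F (y+1)` telescope, where
`F y = y q(y) / x ≥ 0`. Summing over `y > m` gives `E[Y - μ; Y > m] ≤ (m+1) q(m+1) / x`, which is
at most `(m+1)/x · P(Y > m)`. For `m = n - r` the resulting bound is `(n+1)/x`, and `r ≤ nx` forces
`n ≥ 1`. Bounding finite partial sums and lower Lebesgue integrals sidesteps any summability or
integrability argument. -/

open MeasureTheory
open scoped ENNReal

noncomputable def negBinomialMass (x : ℝ) (r y : ℕ) : ℝ :=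
  (Nat.choose (y + r - 1) y : ℝ) * x ^ r * (1 - x) ^ y

section NegBinomialMass

variable {x : ℝ}

lemma negBinomialMass_nonneg (hx0 : 0 ≤ x) (hx1 : x ≤ 1) (r y : ℕ) :
    0 ≤ negBinomialMass x r y := by
  have : 0 ≤ 1 - x := by linarith
  unfold negBinomialMass
  positivity

lemma succ_mul_negBinomialMass_succ (r y : ℕ) :
    ((y : ℝ) + 1) * negBinomialMass x r (y + 1) = (y + r) * (1 - x) * negBinomialMass x r y := by
  rcases Nat.eq_zero_or_pos r with rfl | hr
  · cases y <;> simp [negBinomialMass]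
  obtain ⟨N, hN⟩ : ∃ N, y + r = N + 1 := ⟨y + r - 1, by omega⟩
  have hchoose : ((y : ℝ) + r) * (Nat.choose (y + r - 1) y : ℝ)
      = (Nat.choose (y + 1 + r - 1) (y + 1) : ℝ) * ((y : ℝ) + 1) := by
    rw [show y + 1 + r - 1 = N + 1 by omega, show y + r - 1 = N by omega]
    have hyr : (y : ℝ) + r = N + 1 := by exact_mod_cast hN
    rw [hyr]
    exact_mod_cast Nat.add_one_mul_choose_eq N y
  unfold negBinomialMass
  linear_combination (-(x ^ r * (1 - x) ^ y * (1 - x))) * hchoose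

end NegBinomialMass

section NegBinomialTail

open Finset

variable {x : ℝ}

lemma centered_mul_negBinomialMass_eq_sub (hx : x ≠ 0) (r y : ℕ) :
    ((y : ℝ) - r * (1 - x) / x) * negBinomialMass x r y
      = y * negBinomialMass x r y / x - ((y + 1 : ℕ) : ℝ) * negBinomialMass x r (y + 1) / x := by
  have h := succ_mul_negBinomialMass_succ (x := x) r y
  push_cast
  field_simp
  linear_combination h

lemma sum_range_tail_negBinomialMass_le (hx0 : 0 < x) (hx1 : x ≤ 1) (r m K : ℕ) :
    ∑ k ∈ range K, ((r : ℝ) + (m + 1 + k : ℕ)) * negBinomialMass x r (m + 1 + k)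
      ≤ (r + r * (1 - x) / x) * ∑ k ∈ range K, negBinomialMass x r (m + 1 + k)
        + (m + 1) / x * negBinomialMass x r (m + 1) := by
  set G : ℕ → ℝ := fun y => y * negBinomialMass x r y / x
  have htelescope : ∑ k ∈ range K,
      (((m + 1 + k : ℕ) : ℝ) - r * (1 - x) / x) * negBinomialMass x r (m + 1 + k)
        = G (m + 1) - G (m + 1 + K) := by
    rw [← sum_range_sub' (fun k => G (m + 1 + k))]
    exact sum_congr rfl fun k _ => centered_mul_negBinomialMass_eq_sub hx0.ne' r (m + 1 + k)
  have hG : 0 ≤ G (m + 1 + K) := by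
    have := negBinomialMass_nonneg hx0.le hx1 r (m + 1 + K)
    positivity
  calc ∑ k ∈ range K, ((r : ℝ) + (m + 1 + k : ℕ)) * negBinomialMass x r (m + 1 + k)
      = (r + r * (1 - x) / x) * ∑ k ∈ range K, negBinomialMass x r (m + 1 + k)
        + ∑ k ∈ range K,
          (((m + 1 + k : ℕ) : ℝ) - r * (1 - x) / x) * negBinomialMass x r (m + 1 + k) := by
        rw [mul_sum, ← sum_add_distrib]
        exact sum_congr rfl fun k _ => by ring
    _ ≤ _ := by
        rw [htelescope]
        have : G (m + 1) = (m + 1) / x * negBinomialMass x r (m + 1) := by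
          simp only [G]; push_cast; ring
        linarith

lemma tsum_tail_negBinomialMass_le (hx0 : 0 < x) (hx1 : x ≤ 1) (r m : ℕ) :
    ∑' k, ENNReal.ofReal (((r : ℝ) + (m + 1 + k : ℕ)) * negBinomialMass x r (m + 1 + k))
      ≤ ENNReal.ofReal (r * (1 - x) / x + (m + 1) / x + r)
        * ∑' k, ENNReal.ofReal (negBinomialMass x r (m + 1 + k)) := by
  have hq := negBinomialMass_nonneg hx0.le hx1 r
  have hx1' : 0 ≤ 1 - x := by linarith
  set T := ∑' k, ENNReal.ofReal (negBinomialMass x r (m + 1 + k))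
  refine ENNReal.tsum_le_of_sum_range_le fun K => ?_
  have hpartial : ∑ k ∈ range K, ENNReal.ofReal (negBinomialMass x r (m + 1 + k)) ≤ T :=
    ENNReal.sum_le_tsum _
  have hfirst : ENNReal.ofReal (negBinomialMass x r (m + 1)) ≤ T :=
    ENNReal.le_tsum (f := fun k => ENNReal.ofReal (negBinomialMass x r (m + 1 + k))) 0
  rw [← ENNReal.ofReal_sum_of_nonneg fun k _ => mul_nonneg (by positivity) (hq _)]
  calc ENNReal.ofReal (∑ k ∈ range K, ((r : ℝ) + (m + 1 + k : ℕ)) * negBinomialMass x r (m + 1 + k))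
      ≤ ENNReal.ofReal ((r + r * (1 - x) / x) * ∑ k ∈ range K, negBinomialMass x r (m + 1 + k)
          + (m + 1) / x * negBinomialMass x r (m + 1)) :=
        ENNReal.ofReal_le_ofReal (sum_range_tail_negBinomialMass_le hx0 hx1 r m K)
    _ = ENNReal.ofReal (r + r * (1 - x) / x)
          * ∑ k ∈ range K, ENNReal.ofReal (negBinomialMass x r (m + 1 + k))
        + ENNReal.ofReal ((m + 1) / x) * ENNReal.ofReal (negBinomialMass x r (m + 1)) := by
        rw [ENNReal.ofReal_add (mul_nonneg (by positivity) (sum_nonneg fun k _ => hq _))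
          (mul_nonneg (by positivity) (hq _)),
          ENNReal.ofReal_mul (by positivity), ENNReal.ofReal_mul (by positivity),
          ENNReal.ofReal_sum_of_nonneg fun k _ => hq (m + 1 + k)]
    _ ≤ ENNReal.ofReal (r + r * (1 - x) / x) * T + ENNReal.ofReal ((m + 1) / x) * T := by
        gcongr
    _ = ENNReal.ofReal (r * (1 - x) / x + (m + 1) / x + r) * T := by
        rw [← add_mul, ← ENNReal.ofReal_add (by positivity) (by positivity)]
        ring_nf

end NegBinomialTail

section Measure

variable {Ω : Type*} [MeasurableSpace Ω] (μ : Measure Ω)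

lemma setLIntegral_setOf_lt_eq_tsum {Y : Ω → ℕ} (hY : Measurable Y) (g : ℕ → ℝ≥0∞) (m : ℕ) :
    ∫⁻ ω in {ω | m < Y ω}, g (Y ω) ∂μ = ∑' k, g (m + 1 + k) * μ {ω | Y ω = m + 1 + k} := by
  have hlevel : ∀ k, MeasurableSet {ω | Y ω = m + 1 + k} :=
    fun k => hY (measurableSet_singleton (m + 1 + k))
  have hunion : {ω | m < Y ω} = ⋃ k, {ω | Y ω = m + 1 + k} := by
    ext ω
    simp only [Set.mem_ofPred_eq, Set.mem_iUnion]
    exact ⟨fun h => ⟨Y ω - (m + 1), by omega⟩, fun ⟨k, hk⟩ => by omega⟩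
  have hdisj : Pairwise (Function.onFun Disjoint fun k => {ω | Y ω = m + 1 + k}) :=
    fun i j hij => Set.disjoint_left.mpr fun ω hi hj => hij (by simp_all)
  rw [hunion, lintegral_iUnion hlevel hdisj]
  refine tsum_congr fun k => ?_
  rw [setLIntegral_congr_fun (hlevel k) (g := fun _ => g (m + 1 + k)) fun ω hω => by
    simp only [Set.mem_ofPred_eq] at hω; rw [hω], setLIntegral_const]

lemma setIntegral_div_toReal_le_of_setLIntegral_le {f : Ω → ℝ} {s : Set Ω} {B : ℝ}
    (hB : 0 ≤ B) (hf : ∀ ω, 0 ≤ f ω) (hfm : AEStronglyMeasurable f (μ.restrict s))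
    (h : ∫⁻ ω in s, ENNReal.ofReal (f ω) ∂μ ≤ ENNReal.ofReal B * μ s) :
    (∫ ω in s, f ω ∂μ) / (μ s).toReal ≤ B := by
  -- this case includes `μ s = ∞`, where the quotient is `0` as well
  rcases eq_or_ne (μ s).toReal 0 with hs | hs
  · simpa [hs] using hB
  have hs_top : μ s ≠ ∞ := fun h => hs (by simp [h])
  rw [div_le_iff₀ (lt_of_le_of_ne ENNReal.toReal_nonneg (Ne.symm hs)),
    integral_eq_lintegral_of_nonneg_ae (Filter.Eventually.of_forall hf) hfm]
  calc (∫⁻ ω in s, ENNReal.ofReal (f ω) ∂μ).toReal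
      ≤ (ENNReal.ofReal B * μ s).toReal :=
        ENNReal.toReal_mono (ENNReal.mul_ne_top ENNReal.ofReal_ne_top hs_top) h
    _ = B * (μ s).toReal := by rw [ENNReal.toReal_mul, ENNReal.toReal_ofReal hB]

theorem setIntegral_div_toReal_le_of_negBinomial {x : ℝ} (hx0 : 0 < x) (hx1 : x ≤ 1) (r : ℕ)
    {Y : Ω → ℕ} (hYm : Measurable Y)
    (hY : ∀ y : ℕ, μ {ω | Y ω = y} = ENNReal.ofReal (negBinomialMass x r y)) (m : ℕ) :
    (∫ ω in {ω | m < Y ω}, ((r : ℝ) + Y ω) ∂μ) / (μ {ω | m < Y ω}).toReal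
      ≤ r * (1 - x) / x + (m + 1) / x + r := by
  have hx1' : 0 ≤ 1 - x := by linarith
  have hq := negBinomialMass_nonneg hx0.le hx1 r
  refine setIntegral_div_toReal_le_of_setLIntegral_le μ (by positivity) (fun ω => by positivity)
    (measurable_const.add (measurable_from_top.comp hYm)).aestronglyMeasurable ?_
  have hmeasure := setLIntegral_setOf_lt_eq_tsum μ hYm (fun _ => 1) m
  simp only [one_mul, setLIntegral_one] at hmeasure
  calc ∫⁻ ω in {ω | m < Y ω}, ENNReal.ofReal ((r : ℝ) + Y ω) ∂μ
      = ∑' k, ENNReal.ofReal (((r : ℝ) + (m + 1 + k : ℕ)) * negBinomialMass x r (m + 1 + k)) := by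
        rw [setLIntegral_setOf_lt_eq_tsum μ hYm (fun y => ENNReal.ofReal ((r : ℝ) + y)) m]
        refine tsum_congr fun k => ?_
        rw [hY, ENNReal.ofReal_mul (by positivity)]
    _ ≤ _ := tsum_tail_negBinomialMass_le hx0 hx1 r m
    _ = _ := by rw [hmeasure, tsum_congr fun k => hY (m + 1 + k)]

end Measure

theorem truncated_negative_binomial_bound_general
    {Ω : Type*} [MeasurableSpace Ω] (μ : Measure Ω)
    (x : ℝ) (hx : x ∈ Set.Ioc (0:ℝ) 1)
    (r n : ℕ) (hr : 1 ≤ r) (hrn : (r : ℝ) ≤ n * x)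
    (Y : Ω → ℕ) (hYmeas : Measurable Y)
    (hY : ∀ y : ℕ, μ {ω | Y ω = y}
      = ENNReal.ofReal ((Nat.choose (y + r - 1) y : ℝ) * x ^ r * (1 - x) ^ y)) :
    ((∫ ω in {ω | n - r < Y ω}, ((r : ℝ) + Y ω) ∂μ) / (μ {ω | n - r < Y ω}).toReal
        ≤ r * (1 - x) / x + ((n : ℝ) - r + 1) / x + r) ∧
      (∫ ω in {ω | n < r + Y ω}, ((r : ℝ) + Y ω) ∂μ) / (μ {ω | n < r + Y ω}).toReal
        ≤ n + 2 * n / x := by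
  obtain ⟨hx0, hx1⟩ := hx
  have hrn' : r ≤ n := by
    have : (r : ℝ) ≤ n := hrn.trans (mul_le_of_le_one_right n.cast_nonneg hx1)
    exact_mod_cast this
  have htail := setIntegral_div_toReal_le_of_negBinomial μ hx0 hx1 r hYmeas hY (n - r)
  rw [Nat.cast_sub hrn'] at htail
  have hsets : {ω | n < r + Y ω} = {ω | n - r < Y ω} := by
    ext ω
    simp only [Set.mem_ofPred_eq]
    omega
  refine ⟨htail, hsets ▸ htail.trans ?_⟩
  have hbound : r * (1 - x) / x + ((n : ℝ) - r + 1) / x + r = (n + 1) / x := by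
    field_simp
    ring
  have hn : (1 : ℝ) ≤ n * x := (Nat.one_le_cast.mpr hr).trans hrn
  rw [hbound, div_le_iff₀ hx0, add_mul, div_mul_cancel₀ _ hx0.ne']
  nlinarith

/-- Let Y ∼ NB(r,x) (failures before the r-th success), x ∈ (0,1],
r ≤ nx. Then E[r + Y | Y > n − r] ≤ r(1−x)/x + (n − r + 1)/x + r, and in
particular E[r + Y | r + Y > n] ≤ n + 2n/x (the bound used for κ_1+⋯+κ_a, whose
law is that of r + Y with r = a). -/
theorem truncated_negative_binomial_bound
    {Ω : Type*} [MeasurableSpace Ω] (μ : Measure Ω) [IsProbabilityMeasure μ]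
    (x : ℝ) (hx : x ∈ Set.Ioc (0:ℝ) 1)
    (r n : ℕ) (hr : 1 ≤ r) (hrn : (r : ℝ) ≤ n * x)
    (Y : Ω → ℕ) (hYmeas : Measurable Y)
    (hY : ∀ y : ℕ, μ {ω | Y ω = y}
      = ENNReal.ofReal ((Nat.choose (y + r - 1) y : ℝ) * x ^ r * (1 - x) ^ y))
    (hpos : μ {ω | n - r < Y ω} ≠ 0) (hpos' : μ {ω | n < r + Y ω} ≠ 0) :
    ((∫ ω in {ω | n - r < Y ω}, ((r : ℝ) + Y ω) ∂μ) / (μ {ω | n - r < Y ω}).toReal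
        ≤ r * (1 - x) / x + ((n : ℝ) - r + 1) / x + r) ∧
      (∫ ω in {ω | n < r + Y ω}, ((r : ℝ) + Y ω) ∂μ) / (μ {ω | n < r + Y ω}).toReal
        ≤ n + 2 * n / x :=
  truncated_negative_binomial_bound_general μ x hx r n hr hrn Y hYmeas hY
end
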